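/- Let p ∈ (0,1] and let 𝒳 = B ∪ G be a partition of 𝒳 into two disjoint sets. Then for every probability measure η on 𝒳, 1/L_η(p) ≤ 2^{6/p − 3} · { γ* · sup_{e : Q(e) ≠ 0} [ (1/Q(e)) Σ_{x ∈ G, y ∈ G : e ∈ γ(x,y)} π(x)η(y) ] + 2 · ( Σ_{e ∈ ℬ} 1/Q(e) ) · ( π(B)^{2/p} + η(B)^{2/p} ) }. -/

import Mathlib

open scoped BigOperators

noncomputable section

/-- The Dirichlet form `E(f,g)`. -/
def dirichletForm {X : Type} [Fintype X] (π : X → ℝ) (k : X → X → ℝ)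
    (f g : X → ℝ) : ℝ :=
  (1 / 2) * ∑ x, ∑ y, (f x - f y) * (g x - g y) * k x y * π x * π y

/-- The sup norm `‖f‖_∞`. -/
def supNorm {X : Type} [Fintype X] (f : X → ℝ) : ℝ := ⨆ x, |f x|

/-- The generalized Poincaré constant `L_η(p)`. -/
def genPoincare {X : Type} [Fintype X] (π : X → ℝ) (k : X → X → ℝ)
    (η : X → ℝ) (p : ℝ) : ℝ :=
  sInf { r : ℝ | ∃ f : X → ℝ, f ≠ 0 ∧ (∑ x, π x * f x) = 0 ∧ (∑ x, η x * |f x|) ≠ 0 ∧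
    r = dirichletForm π k f f * supNorm f ^ ((2 - 2 * p) / p) /
      (∑ x, η x * |f x|) ^ (2 / p) }

/-- The (ordered) edges of a path given as its list of successive vertices. -/
def pathEdges {X : Type} (l : List X) : List (X × X) := l.zip l.tail

/-- The weight `Q(e) = k(x,y) π(x) π(y)` of an edge `e = (x,y)`. -/
def Qw {X : Type} (π : X → ℝ) (k : X → X → ℝ) (e : X × X) : ℝ :=
  k e.1 e.2 * π e.1 * π e.2

/-! For `f` of `π`-mean zero, `η(|f|) ≤ ∑_{x,y} π(x) η(y) |f x - f y|`; split the pairs into those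
inside `G` and those meeting `B`. The good pairs are routed along their paths, and Cauchy–Schwarz
over the edges bounds the square of their contribution by `γ* · A · 2E(f,f)`, `A` the congestion.
A bad pair is bounded on its own by Cauchy–Schwarz along its path with weights `1/Q`, giving
`(∑_{e ∈ ℬ} 1/Q(e)) · 2E(f,f)`, and the bad pairs carry mass at most `π(B) + η(B)`. Both parts are
also at most `2‖f‖_∞` times their mass; interpolating between these `L²` and `L^∞` bounds with
`q = 2/p ≥ 2` gives `η(|f|)^q ≤ C · E(f,f) · ‖f‖_∞^(q-2)`, that is `1/L_η(p) ≤ C`. -/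

open Finset

section Paths

variable {X : Type} [DecidableEq X]

theorem abs_sub_le_sum_pathEdges (f : X → ℝ) :
    ∀ {l : List X} {y : X}, l.getLast? = some y → ∀ v ∈ l,
      |f v - f y| ≤ ∑ e ∈ (pathEdges l).toFinset, |f e.1 - f e.2|
  | [], _, hy, _, _ => by simp at hy
  | [a], y, hy, v, hv => by
    simp only [List.getLast?_singleton, Option.some.injEq, List.mem_singleton] at hy hv
    simp [hv, hy, pathEdges]
  | a :: b :: t, y, hy, v, hv => by
    rw [List.getLast?_cons_cons] at hy
    have ih := abs_sub_le_sum_pathEdges f hy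
    have hedges : (pathEdges (a :: b :: t)).toFinset =
        insert (a, b) (pathEdges (b :: t)).toFinset := by
      simp [pathEdges]
    rcases List.mem_cons.1 hv with rfl | hv
    · by_cases hab : (v, b) ∈ pathEdges (b :: t)
      -- the edge `(v, b)` is traversed again later, so `v` already lies on the tail
      · rw [hedges, insert_eq_of_mem (List.mem_toFinset.2 hab)]
        exact ih v (List.of_mem_zip hab).1
      · rw [hedges, sum_insert (by simpa using hab)]
        calc |f v - f y| ≤ |f v - f b| + |f b - f y| := abs_sub_le _ _ _
          _ ≤ _ := by gcongr; exact ih b List.mem_cons_self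
    · refine (ih v hv).trans (sum_le_sum_of_subset_of_nonneg ?_ fun _ _ _ => abs_nonneg _)
      rw [hedges]
      exact subset_insert _ _

theorem card_toFinset_pathEdges_le (l : List X) :
    (pathEdges l).toFinset.card ≤ l.length - 1 := by
  refine (List.toFinset_card_le _).trans ?_
  rw [pathEdges, List.length_zip, List.length_tail]
  exact min_le_right _ _

theorem filter_mem_pathEdges [Fintype X] (l : List X) :
    univ.filter (· ∈ pathEdges l) = (pathEdges l).toFinset := by
  ext; simp

end Paths

theorem Real.rpow_add_le_mul_rpow_add_rpow {a b q : ℝ} (ha : 0 ≤ a) (hb : 0 ≤ b) (hq : 1 ≤ q) :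
    (a + b) ^ q ≤ 2 ^ (q - 1) * (a ^ q + b ^ q) := by
  lift a to NNReal using ha
  lift b to NNReal using hb
  exact_mod_cast NNReal.rpow_add_le_mul_rpow_add_rpow a b hq

theorem sq_mul_rpow_sub_two {a q : ℝ} (ha : 0 ≤ a) (hq : 2 ≤ q) :
    a ^ 2 * a ^ (q - 2) = a ^ q := by
  rw [← Real.rpow_natCast, ← Real.rpow_add' ha (by push_cast; linarith)]
  norm_num

theorem rpow_le_sq_mul_rpow_sub_two {a c q : ℝ} (ha : 0 ≤ a) (hac : a ≤ c) (hq : 2 ≤ q) :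
    a ^ q ≤ a ^ 2 * c ^ (q - 2) := by
  rw [← sq_mul_rpow_sub_two ha hq]
  gcongr

theorem rpow_le_of_sq_le_of_le {a N u D q : ℝ} (ha : 0 ≤ a) (hq : 2 ≤ q) (haN : a ≤ 2 * N)
    (ha2 : a ^ 2 ≤ u * (2 * D)) : a ^ q ≤ 2 ^ (q - 1) * u * (D * N ^ (q - 2)) := by
  have hN : 0 ≤ N := by linarith
  calc a ^ q ≤ a ^ 2 * (2 * N) ^ (q - 2) := rpow_le_sq_mul_rpow_sub_two ha haN hq
    _ ≤ u * (2 * D) * (2 * N) ^ (q - 2) := mul_le_mul_of_nonneg_right ha2 (by positivity)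
    _ = 2 ^ (q - 1) * u * (D * N ^ (q - 2)) := by
        rw [Real.mul_rpow zero_le_two hN, show q - 1 = q - 2 + 1 by ring,
          Real.rpow_add_one two_ne_zero]
        ring

theorem rpow_le_of_le_add {S a b N P H u v D q : ℝ} (hq : 2 ≤ q) (hS : 0 ≤ S) (ha : 0 ≤ a)
    (hb : 0 ≤ b) (hP : 0 ≤ P) (hH : 0 ≤ H) (hu : 0 ≤ u) (hv : 0 ≤ v) (hD : 0 ≤ D)
    (hSab : S ≤ a + b) (haN : a ≤ 2 * N) (ha2 : a ^ 2 ≤ u * (2 * D))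
    (hbN : b ≤ 2 * (N * (P + H))) (hb2 : b ^ 2 ≤ (P + H) ^ 2 * v * (2 * D)) :
    S ^ q ≤ 2 ^ (3 * q - 3) * (u + 2 * v * (P ^ q + H ^ q)) * (D * N ^ (q - 2)) := by
  have hN : 0 ≤ N := by linarith
  set t : ℝ := 2 ^ (q - 1) with ht_def
  set K := D * N ^ (q - 2)
  have hK : 0 ≤ K := by positivity
  have ht : 1 ≤ t := Real.one_le_rpow one_le_two (by linarith)
  have ht3 : (2 : ℝ) ^ (3 * q - 3) = t ^ 3 := by
    rw [ht_def, ← Real.rpow_natCast, ← Real.rpow_mul zero_le_two]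
    ring_nf
  have hSq : S ^ q ≤ t * (a ^ q + b ^ q) :=
    (Real.rpow_le_rpow hS hSab (by linarith)).trans
      (Real.rpow_add_le_mul_rpow_add_rpow ha hb (by linarith))
  have haq : a ^ q ≤ t * u * K := rpow_le_of_sq_le_of_le ha hq haN ha2
  have hbq : b ^ q ≤ t * v * (P + H) ^ q * K := by
    -- the bound for `a`, with `N` replaced by `N * (P + H)`
    have h := rpow_le_of_sq_le_of_le (u := (P + H) ^ 2 * v) hb hq hbN hb2
    rwa [Real.mul_rpow hN (by positivity), show t * ((P + H) ^ 2 * v) * (D * (N ^ (q - 2) *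
      (P + H) ^ (q - 2))) = t * v * ((P + H) ^ 2 * (P + H) ^ (q - 2)) * K by ring,
      sq_mul_rpow_sub_two (by positivity) hq] at h
  have hPHq : (P + H) ^ q ≤ t * (P ^ q + H ^ q) :=
    Real.rpow_add_le_mul_rpow_add_rpow hP hH (by linarith)
  have hPHq' : 0 ≤ P ^ q + H ^ q := by positivity
  rw [ht3]
  calc S ^ q ≤ t * (t * u * K + t * v * (t * (P ^ q + H ^ q)) * K) := by
        refine hSq.trans (mul_le_mul_of_nonneg_left (add_le_add haq (hbq.trans ?_)) (by linarith))
        gcongr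
    _ = t ^ 2 * u * K + t ^ 3 * v * (P ^ q + H ^ q) * K := by ring
    _ ≤ t ^ 3 * u * K + t ^ 3 * (2 * v * (P ^ q + H ^ q)) * K := by
        have h23 : t ^ 2 * u * K ≤ t ^ 3 * u * K := by gcongr; norm_num
        have hbad : 0 ≤ t ^ 3 * v * (P ^ q + H ^ q) * K :=
          mul_nonneg (mul_nonneg (mul_nonneg (pow_nonneg (by linarith) 3) hv) hPHq') hK
        linarith
    _ = t ^ 3 * (u + 2 * v * (P ^ q + H ^ q)) * K := by ring

theorem sq_sum_mul_le_sq_sum_mul {ι : Type*} (s : Finset ι) {c g : ι → ℝ} {M : ℝ}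
    (hc : ∀ i ∈ s, 0 ≤ c i) (hg : ∀ i ∈ s, c i ≠ 0 → g i ^ 2 ≤ M) :
    (∑ i ∈ s, c i * g i) ^ 2 ≤ (∑ i ∈ s, c i) ^ 2 * M := by
  have hcg : ∀ i ∈ s, c i * g i ^ 2 ≤ c i * M := fun i hi => by
    by_cases h : c i = 0
    · simp [h]
    · exact mul_le_mul_of_nonneg_left (hg i hi h) (hc i hi)
  calc (∑ i ∈ s, c i * g i) ^ 2 ≤ (∑ i ∈ s, c i) * ∑ i ∈ s, c i * g i ^ 2 :=
        sum_sq_le_sum_mul_sum_of_sq_le_mul s hc (fun i hi => mul_nonneg (hc i hi) (sq_nonneg _))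
          fun i _ => le_of_eq (by ring)
    _ ≤ (∑ i ∈ s, c i) * ∑ i ∈ s, c i * M :=
        mul_le_mul_of_nonneg_left (sum_le_sum hcg) (sum_nonneg hc)
    _ = (∑ i ∈ s, c i) ^ 2 * M := by rw [← sum_mul]; ring

theorem one_div_sInf_le {s : Set ℝ} {R : ℝ} (hR : 0 ≤ R) (h : ∀ r ∈ s, 1 ≤ R * r) :
    1 / sInf s ≤ R := by
  rcases s.eq_empty_or_nonempty with rfl | ⟨r₀, hr₀⟩
  · simpa using hR
  have hRpos : 0 < R := lt_of_le_of_ne hR fun h0 => absurd (h r₀ hr₀) (by rw [← h0]; norm_num)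
  have hlow : 1 / R ≤ sInf s := le_csInf ⟨r₀, hr₀⟩ fun r hr => by
    rw [div_le_iff₀ hRpos, mul_comm]; exact h r hr
  calc 1 / sInf s ≤ 1 / (1 / R) := one_div_le_one_div_of_le (by positivity) hlow
    _ = R := one_div_one_div R

section Network

variable {X : Type} {π : X → ℝ} {k : X → X → ℝ}

theorem Qw_nonneg (hπ : ∀ x, 0 ≤ π x) (hk : ∀ x y, 0 ≤ k x y) (e : X × X) :
    0 ≤ Qw π k e :=
  mul_nonneg (mul_nonneg (hk _ _) (hπ _)) (hπ _)

theorem Qw_pos (hπ : ∀ x, 0 < π x) (hk : ∀ x y, 0 ≤ k x y) {e : X × X}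
    (he : k e.1 e.2 ≠ 0) : 0 < Qw π k e :=
  mul_pos (mul_pos ((hk _ _).lt_of_ne he.symm) (hπ _)) (hπ _)

variable [Fintype X]

theorem sum_Qw_mul_sq_sub (f : X → ℝ) :
    ∑ e : X × X, Qw π k e * (f e.1 - f e.2) ^ 2 = 2 * dirichletForm π k f f := by
  rw [dirichletForm, Fintype.sum_prod_type, ← mul_assoc, show (2 : ℝ) * (1 / 2) = 1 by norm_num,
    one_mul]
  refine Finset.sum_congr rfl fun x _ => Finset.sum_congr rfl fun y _ => ?_
  simp only [Qw]
  ring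

theorem dirichletForm_nonneg (hπ : ∀ x, 0 ≤ π x) (hk : ∀ x y, 0 ≤ k x y) (f : X → ℝ) :
    0 ≤ dirichletForm π k f f := by
  have h := sum_Qw_mul_sq_sub (π := π) (k := k) f
  have : 0 ≤ ∑ e : X × X, Qw π k e * (f e.1 - f e.2) ^ 2 :=
    sum_nonneg fun e _ => mul_nonneg (Qw_nonneg hπ hk e) (sq_nonneg _)
  linarith

theorem abs_sub_le_two_mul_supNorm (f : X → ℝ) (x y : X) : |f x - f y| ≤ 2 * supNorm f := by
  have hle : ∀ x, |f x| ≤ supNorm f := le_ciSup (Set.finite_range _).bddAbove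
  linarith [abs_sub (f x) (f y), hle x, hle y]

theorem supNorm_nonneg (f : X → ℝ) : 0 ≤ supNorm f :=
  Real.iSup_nonneg fun _ => abs_nonneg _

theorem sum_mul_abs_sub_le_sum_mul_supNorm {c : X × X → ℝ} (hc : ∀ z, 0 ≤ c z) (f : X → ℝ) :
    ∑ z, c z * |f z.1 - f z.2| ≤ (∑ z, c z) * (2 * supNorm f) := by
  rw [sum_mul]
  exact sum_le_sum fun z _ => mul_le_mul_of_nonneg_left (abs_sub_le_two_mul_supNorm f _ _) (hc z)

theorem sum_mul_abs_le_sum_mul_abs_sub {η : X → ℝ} (hπ : ∀ x, 0 ≤ π x) (hπ1 : ∑ x, π x = 1)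
    (hη : ∀ x, 0 ≤ η x) {f : X → ℝ} (hmean : ∑ x, π x * f x = 0) :
    ∑ y, η y * |f y| ≤ ∑ z : X × X, π z.1 * η z.2 * |f z.1 - f z.2| := by
  have hpt : ∀ y, |f y| ≤ ∑ x, π x * |f x - f y| := fun y => by
    have hfy : f y = ∑ x, π x * (f y - f x) := by
      simp [mul_sub, sum_sub_distrib, ← sum_mul, hπ1, hmean]
    calc |f y| = |∑ x, π x * (f y - f x)| := by rw [← hfy]
      _ ≤ ∑ x, |π x * (f y - f x)| := abs_sum_le_sum_abs _ _
      _ = ∑ x, π x * |f x - f y| := Finset.sum_congr rfl fun x _ => by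
          rw [abs_mul, abs_of_nonneg (hπ x), abs_sub_comm]
  calc ∑ y, η y * |f y| ≤ ∑ y, η y * ∑ x, π x * |f x - f y| :=
        sum_le_sum fun y _ => mul_le_mul_of_nonneg_left (hpt y) (hη y)
    _ = ∑ z : X × X, π z.1 * η z.2 * |f z.1 - f z.2| := by
        rw [Fintype.sum_prod_type, sum_comm]
        refine Finset.sum_congr rfl fun y _ => ?_
        rw [mul_sum]
        exact Finset.sum_congr rfl fun x _ => by ring

variable [DecidableEq X]

theorem sq_abs_sub_le_sum_one_div_Qw_mul (hπ : ∀ x, 0 < π x) (hk : ∀ x y, 0 ≤ k x y)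
    (f : X → ℝ) {l : List X} {x y : X} (hx : l.head? = some x) (hy : l.getLast? = some y)
    (hl : ∀ e ∈ pathEdges l, k e.1 e.2 ≠ 0) :
    |f x - f y| ^ 2 ≤
      (∑ e ∈ (pathEdges l).toFinset, 1 / Qw π k e) * (2 * dirichletForm π k f f) := by
  set T := (pathEdges l).toFinset
  have hQ : ∀ e ∈ T, 0 < Qw π k e := fun e he => Qw_pos hπ hk (hl e (List.mem_toFinset.1 he))
  have hQinv : 0 ≤ ∑ e ∈ T, 1 / Qw π k e := sum_nonneg fun e he => (one_div_pos.2 (hQ e he)).le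
  calc |f x - f y| ^ 2 ≤ (∑ e ∈ T, |f e.1 - f e.2|) ^ 2 := by
        gcongr
        exact abs_sub_le_sum_pathEdges f hy x (List.mem_of_mem_head? hx)
    _ ≤ (∑ e ∈ T, 1 / Qw π k e) * ∑ e ∈ T, Qw π k e * (f e.1 - f e.2) ^ 2 :=
        sum_sq_le_sum_mul_sum_of_sq_le_mul T (fun e he => (one_div_pos.2 (hQ e he)).le)
          (fun e he => mul_nonneg (hQ e he).le (sq_nonneg _)) fun e he => by
            rw [← mul_assoc, one_div_mul_cancel (hQ e he).ne', one_mul, sq_abs]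
    _ ≤ (∑ e ∈ T, 1 / Qw π k e) * (2 * dirichletForm π k f f) := by
        rw [← sum_Qw_mul_sq_sub]
        exact mul_le_mul_of_nonneg_left (sum_le_sum_of_subset_of_nonneg (subset_univ _)
          fun e _ _ => mul_nonneg (Qw_nonneg (fun x => (hπ x).le) hk e) (sq_nonneg _)) hQinv

def pathFlow (γ : X → X → List X) (c : X × X → ℝ) (e : X × X) : ℝ :=
  ∑ z : X × X, if z.1 ≠ z.2 ∧ e ∈ pathEdges (γ z.1 z.2) then c z else 0

variable {γ : X → X → List X} {c : X × X → ℝ}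

theorem pathFlow_nonneg (hc : ∀ z, 0 ≤ c z) (e : X × X) : 0 ≤ pathFlow γ c e :=
  sum_nonneg fun z _ => by split_ifs <;> simp [hc z]

theorem sum_mul_abs_sub_le_sum_pathFlow (hc : ∀ z, 0 ≤ c z)
    (hγ : ∀ x y, x ≠ y → (γ x y).head? = some x ∧ (γ x y).getLast? = some y) (f : X → ℝ) :
    ∑ z, c z * |f z.1 - f z.2| ≤ ∑ e, pathFlow γ c e * |f e.1 - f e.2| := by
  have hpair : ∀ z : X × X, c z * |f z.1 - f z.2| ≤
      ∑ e, (if z.1 ≠ z.2 ∧ e ∈ pathEdges (γ z.1 z.2) then c z else 0) * |f e.1 - f e.2| := by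
    intro z
    by_cases hz : z.1 = z.2
    · simp [hz]
    obtain ⟨hx, hy⟩ := hγ z.1 z.2 hz
    simp only [ne_eq, hz, not_false_eq_true, true_and, ite_mul, zero_mul]
    rw [← sum_filter, filter_mem_pathEdges, ← mul_sum]
    exact mul_le_mul_of_nonneg_left
      (abs_sub_le_sum_pathEdges f hy z.1 (List.mem_of_mem_head? hx)) (hc z)
  calc ∑ z, c z * |f z.1 - f z.2|
      ≤ ∑ z, ∑ e, (if z.1 ≠ z.2 ∧ e ∈ pathEdges (γ z.1 z.2) then c z else 0) *
          |f e.1 - f e.2| := sum_le_sum fun z _ => hpair z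
    _ = ∑ e, pathFlow γ c e * |f e.1 - f e.2| := by
        rw [sum_comm]; simp only [pathFlow, sum_mul]

theorem sum_pathFlow_le (hc : ∀ z, 0 ≤ c z) {L : ℝ} (hL0 : 0 ≤ L)
    (hL : ∀ x y, x ≠ y → (((γ x y).length - 1 : ℕ) : ℝ) ≤ L) :
    ∑ e, pathFlow γ c e ≤ L * ∑ z, c z := by
  have hpair : ∀ z : X × X,
      ∑ e, (if z.1 ≠ z.2 ∧ e ∈ pathEdges (γ z.1 z.2) then c z else 0) ≤ L * c z := by
    intro z
    by_cases hz : z.1 = z.2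
    · simp [hz, mul_nonneg hL0 (hc z)]
    simp only [ne_eq, hz, not_false_eq_true, true_and]
    rw [← sum_filter, filter_mem_pathEdges, sum_const, nsmul_eq_mul]
    refine mul_le_mul_of_nonneg_right (le_trans ?_ (hL _ _ hz)) (hc z)
    exact_mod_cast card_toFinset_pathEdges_le _
  calc ∑ e, pathFlow γ c e
      = ∑ z, ∑ e, (if z.1 ≠ z.2 ∧ e ∈ pathEdges (γ z.1 z.2) then c z else 0) := by
        simp only [pathFlow]; exact sum_comm
    _ ≤ ∑ z, L * c z := sum_le_sum fun z _ => hpair z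
    _ = L * ∑ z, c z := (mul_sum _ _ _).symm

theorem pathFlow_le_mul_Qw (hπ : ∀ x, 0 < π x) (hk : ∀ x y, 0 ≤ k x y)
    (hγ : ∀ x y, x ≠ y → ∀ e ∈ pathEdges (γ x y), k e.1 e.2 ≠ 0) {A : ℝ}
    (hA : ∀ e, Qw π k e ≠ 0 → 1 / Qw π k e * pathFlow γ c e ≤ A) (e : X × X) :
    pathFlow γ c e ≤ A * Qw π k e := by
  rcases (Qw_nonneg (fun x => (hπ x).le) hk e).eq_or_lt with h0 | hpos
  · have : pathFlow γ c e = 0 := sum_eq_zero fun z _ =>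
      if_neg fun ⟨hz, he⟩ => (Qw_pos hπ hk (hγ _ _ hz e he)).ne' h0.symm
    rw [this, ← h0, mul_zero]
  calc pathFlow γ c e = Qw π k e * (1 / Qw π k e * pathFlow γ c e) := by field_simp
    _ ≤ Qw π k e * A := mul_le_mul_of_nonneg_left (hA e hpos.ne') hpos.le
    _ = A * Qw π k e := mul_comm _ _

/-- Route the mass `c z` of each pair along its path, then apply Cauchy–Schwarz over edges. -/
theorem sq_sum_mul_abs_sub_le (hc : ∀ z, 0 ≤ c z)
    (hγ : ∀ x y, x ≠ y → (γ x y).head? = some x ∧ (γ x y).getLast? = some y)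
    {L A : ℝ} (hL0 : 0 ≤ L) (hL : ∀ x y, x ≠ y → (((γ x y).length - 1 : ℕ) : ℝ) ≤ L)
    (hA : ∀ e, pathFlow γ c e ≤ A * Qw π k e) (f : X → ℝ) :
    (∑ z, c z * |f z.1 - f z.2|) ^ 2 ≤ L * (∑ z, c z) * A * (2 * dirichletForm π k f f) := by
  have hw := pathFlow_nonneg (γ := γ) hc
  have henergy : ∑ e, pathFlow γ c e * |f e.1 - f e.2| ^ 2 ≤ A * (2 * dirichletForm π k f f) := by
    rw [← sum_Qw_mul_sq_sub, mul_sum]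
    refine sum_le_sum fun e _ => ?_
    rw [sq_abs, ← mul_assoc]
    exact mul_le_mul_of_nonneg_right (hA e) (sq_nonneg _)
  calc (∑ z, c z * |f z.1 - f z.2|) ^ 2 ≤ (∑ e, pathFlow γ c e * |f e.1 - f e.2|) ^ 2 :=
        pow_le_pow_left₀ (sum_nonneg fun z _ => mul_nonneg (hc z) (abs_nonneg _))
          (sum_mul_abs_sub_le_sum_pathFlow hc hγ f) 2
    _ ≤ (∑ e, pathFlow γ c e) * ∑ e, pathFlow γ c e * |f e.1 - f e.2| ^ 2 :=
        sum_sq_le_sum_mul_sum_of_sq_le_mul _ (fun e _ => hw e)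
          (fun e _ => mul_nonneg (hw e) (sq_nonneg _)) fun e _ => le_of_eq (by ring)
    _ ≤ (L * ∑ z, c z) * (A * (2 * dirichletForm π k f f)) :=
        mul_le_mul (sum_pathFlow_le hc hL0 hL) henergy
          (sum_nonneg fun e _ => mul_nonneg (hw e) (sq_nonneg _))
          (mul_nonneg hL0 (sum_nonneg fun z _ => hc z))
    _ = L * (∑ z, c z) * A * (2 * dirichletForm π k f f) := by ring

end Network

section Partition

variable {X : Type} {π : X → ℝ} {k : X → X → ℝ} {η : X → ℝ} {γ : X → X → List X}
  {B G : Finset X}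

/- `maxPathLength`, `goodCongestion` and `badResistance` are the path quantities of the bound,
spelled exactly as in the statement so that they unfold to it. -/
variable (γ) in
def maxPathLength : ℝ :=
  sSup { r : ℝ | ∃ x y : X, x ≠ y ∧ r = ((γ x y).length - 1 : ℕ) }

theorem maxPathLength_nonneg : 0 ≤ maxPathLength γ :=
  Real.sSup_nonneg fun _ ⟨_, _, _, hr⟩ => hr ▸ Nat.cast_nonneg _

section Weights

variable [DecidableEq X]

variable (π η G) in
def goodPairWeight (z : X × X) : ℝ :=
  if z.1 ∈ G ∧ z.2 ∈ G then π z.1 * η z.2 else 0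

variable (π η B) in
def badPairWeight (z : X × X) : ℝ :=
  if z.1 ∈ B ∨ z.2 ∈ B then π z.1 * η z.2 else 0

theorem goodPairWeight_nonneg (hπ : ∀ x, 0 ≤ π x) (hη : ∀ x, 0 ≤ η x) (z : X × X) :
    0 ≤ goodPairWeight π η G z := by
  unfold goodPairWeight; split_ifs; exacts [mul_nonneg (hπ _) (hη _), le_rfl]

theorem badPairWeight_nonneg (hπ : ∀ x, 0 ≤ π x) (hη : ∀ x, 0 ≤ η x) (z : X × X) :
    0 ≤ badPairWeight π η B z := by
  unfold badPairWeight; split_ifs; exacts [mul_nonneg (hπ _) (hη _), le_rfl]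

end Weights

variable [Fintype X]

theorem le_maxPathLength {x y : X} (hxy : x ≠ y) :
    (((γ x y).length - 1 : ℕ) : ℝ) ≤ maxPathLength γ :=
  le_csSup (by
    refine (Set.finite_range fun z : X × X => (((γ z.1 z.2).length - 1 : ℕ) : ℝ)).bddAbove.mono ?_
    rintro r ⟨x, y, -, rfl⟩
    exact ⟨(x, y), rfl⟩) ⟨x, y, hxy, rfl⟩

variable [DecidableEq X]

variable (π k η γ G) in
def goodCongestion : ℝ :=
  sSup { r : ℝ | ∃ e : X × X, Qw π k e ≠ 0 ∧
    r = (1 / Qw π k e) *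
      ∑ x, ∑ y, if x ∈ G ∧ y ∈ G ∧ x ≠ y ∧ e ∈ pathEdges (γ x y) then π x * η y else 0 }

variable (π k γ B) in
def badResistance : ℝ :=
  ∑ e : X × X, if ∃ x y : X, x ≠ y ∧ e ∈ pathEdges (γ x y) ∧ (x ∈ B ∨ y ∈ B) then
    1 / Qw π k e else 0

theorem pathFlow_goodPairWeight (e : X × X) :
    pathFlow γ (goodPairWeight π η G) e =
      ∑ x, ∑ y, if x ∈ G ∧ y ∈ G ∧ x ≠ y ∧ e ∈ pathEdges (γ x y) then π x * η y else 0 := by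
  rw [pathFlow, Fintype.sum_prod_type]
  refine Finset.sum_congr rfl fun x _ => Finset.sum_congr rfl fun y _ => ?_
  simp only [goodPairWeight]
  split_ifs <;> tauto

theorem le_goodCongestion {e : X × X} (he : Qw π k e ≠ 0) :
    1 / Qw π k e * pathFlow γ (goodPairWeight π η G) e ≤ goodCongestion π k η γ G := by
  rw [goodCongestion]
  refine le_csSup ?_ ⟨e, he, by rw [pathFlow_goodPairWeight]⟩
  refine (Set.finite_range fun e => 1 / Qw π k e * pathFlow γ (goodPairWeight π η G) e
    ).bddAbove.mono ?_
  rintro r ⟨e, -, rfl⟩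
  exact ⟨e, by simp only [pathFlow_goodPairWeight]⟩

theorem goodCongestion_nonneg (hπ : ∀ x, 0 ≤ π x) (hk : ∀ x y, 0 ≤ k x y)
    (hη : ∀ x, 0 ≤ η x) : 0 ≤ goodCongestion π k η γ G := by
  refine Real.sSup_nonneg ?_
  rintro r ⟨e, -, rfl⟩
  refine mul_nonneg (one_div_nonneg.2 (Qw_nonneg hπ hk e))
    (sum_nonneg fun x _ => sum_nonneg fun y _ => ?_)
  split_ifs
  exacts [mul_nonneg (hπ x) (hη y), le_rfl]

theorem badResistance_nonneg (hπ : ∀ x, 0 ≤ π x) (hk : ∀ x y, 0 ≤ k x y) :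
    0 ≤ badResistance π k γ B :=
  sum_nonneg fun e _ => by split_ifs; exacts [one_div_nonneg.2 (Qw_nonneg hπ hk e), le_rfl]

theorem sum_one_div_Qw_le_badResistance (hπ : ∀ x, 0 ≤ π x) (hk : ∀ x y, 0 ≤ k x y)
    {x y : X} (hxy : x ≠ y) (hB : x ∈ B ∨ y ∈ B) :
    ∑ e ∈ (pathEdges (γ x y)).toFinset, 1 / Qw π k e ≤ badResistance π k γ B := by
  calc ∑ e ∈ (pathEdges (γ x y)).toFinset, 1 / Qw π k e
      = ∑ e ∈ (pathEdges (γ x y)).toFinset,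
          if ∃ x y : X, x ≠ y ∧ e ∈ pathEdges (γ x y) ∧ (x ∈ B ∨ y ∈ B) then
            1 / Qw π k e else 0 :=
        Finset.sum_congr rfl fun e he => (if_pos ⟨x, y, hxy, List.mem_toFinset.1 he, hB⟩).symm
    _ ≤ badResistance π k γ B :=
        sum_le_sum_of_subset_of_nonneg (subset_univ _) fun e _ _ => by
          split_ifs; exacts [one_div_nonneg.2 (Qw_nonneg hπ hk e), le_rfl]

theorem sum_goodPairWeight_le (hπ : ∀ x, 0 ≤ π x) (hη : ∀ x, 0 ≤ η x)
    (hπ1 : ∑ x, π x = 1) (hη1 : ∑ x, η x = 1) : ∑ z, goodPairWeight π η G z ≤ 1 := by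
  have hprod : ∑ z : X × X, π z.1 * η z.2 = 1 := by
    rw [Fintype.sum_prod_type]
    simp [← mul_sum, hπ1, hη1]
  rw [← hprod]
  refine sum_le_sum fun z _ => ?_
  unfold goodPairWeight; split_ifs; exacts [le_rfl, mul_nonneg (hπ _) (hη _)]

theorem sum_badPairWeight_le (hπ : ∀ x, 0 ≤ π x) (hη : ∀ x, 0 ≤ η x)
    (hπ1 : ∑ x, π x = 1) (hη1 : ∑ x, η x = 1) :
    ∑ z, badPairWeight π η B z ≤ ∑ x ∈ B, π x + ∑ x ∈ B, η x := by
  have hfst : ∑ z : X × X, (if z.1 ∈ B then π z.1 * η z.2 else 0) = ∑ x ∈ B, π x := by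
    rw [Fintype.sum_prod_type]
    simp [← mul_sum, hη1]
  have hsnd : ∑ z : X × X, (if z.2 ∈ B then π z.1 * η z.2 else 0) = ∑ x ∈ B, η x := by
    rw [Fintype.sum_prod_type]
    simp [← mul_sum, ← sum_mul, hπ1]
  rw [← hfst, ← hsnd, ← sum_add_distrib]
  refine sum_le_sum fun z _ => ?_
  have h0 := mul_nonneg (hπ z.1) (hη z.2)
  unfold badPairWeight
  split_ifs <;> simp_all

theorem mul_le_goodPairWeight_add_badPairWeight (hcover : B ∪ G = univ)
    (hπ : ∀ x, 0 ≤ π x) (hη : ∀ x, 0 ≤ η x) (z : X × X) :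
    π z.1 * η z.2 ≤ goodPairWeight π η G z + badPairWeight π η B z := by
  have hmem : ∀ x, x ∈ B ∨ x ∈ G := fun x => mem_union.1 (hcover.symm ▸ mem_univ x)
  by_cases hB : z.1 ∈ B ∨ z.2 ∈ B
  · have : badPairWeight π η B z = π z.1 * η z.2 := if_pos hB
    linarith [goodPairWeight_nonneg hπ hη (G := G) z]
  · rw [not_or] at hB
    have : goodPairWeight π η G z = π z.1 * η z.2 :=
      if_pos ⟨(hmem z.1).resolve_left hB.1, (hmem z.2).resolve_left hB.2⟩
    linarith [badPairWeight_nonneg hπ hη (B := B) z]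

theorem sq_sum_goodPairWeight_mul_abs_sub_le (hπ : ∀ x, 0 < π x) (hπ1 : ∑ x, π x = 1)
    (hk : ∀ x y, 0 ≤ k x y)
    (hγ : ∀ x y, x ≠ y → (γ x y).head? = some x ∧ (γ x y).getLast? = some y ∧
      ∀ e ∈ pathEdges (γ x y), k e.1 e.2 ≠ 0)
    (hη : ∀ x, 0 ≤ η x) (hη1 : ∑ x, η x = 1) (f : X → ℝ) :
    (∑ z, goodPairWeight π η G z * |f z.1 - f z.2|) ^ 2 ≤
      maxPathLength γ * goodCongestion π k η γ G * (2 * dirichletForm π k f f) := by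
  have hπ0 : ∀ x, 0 ≤ π x := fun x => (hπ x).le
  calc (∑ z, goodPairWeight π η G z * |f z.1 - f z.2|) ^ 2
      ≤ maxPathLength γ * (∑ z, goodPairWeight π η G z) * goodCongestion π k η γ G *
          (2 * dirichletForm π k f f) :=
        sq_sum_mul_abs_sub_le (goodPairWeight_nonneg hπ0 hη)
          (fun x y h => ⟨(hγ x y h).1, (hγ x y h).2.1⟩) maxPathLength_nonneg
          (fun _ _ => le_maxPathLength)
          (pathFlow_le_mul_Qw hπ hk (fun x y h => (hγ x y h).2.2) fun _ he => le_goodCongestion he)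
          f
    _ ≤ maxPathLength γ * 1 * goodCongestion π k η γ G * (2 * dirichletForm π k f f) := by
        gcongr
        · exact mul_nonneg two_pos.le (dirichletForm_nonneg hπ0 hk f)
        · exact goodCongestion_nonneg hπ0 hk hη
        · exact maxPathLength_nonneg
        · exact sum_goodPairWeight_le hπ0 hη hπ1 hη1
    _ = maxPathLength γ * goodCongestion π k η γ G * (2 * dirichletForm π k f f) := by ring

theorem sq_sum_badPairWeight_mul_abs_sub_le (hπ : ∀ x, 0 < π x) (hπ1 : ∑ x, π x = 1)
    (hk : ∀ x y, 0 ≤ k x y)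
    (hγ : ∀ x y, x ≠ y → (γ x y).head? = some x ∧ (γ x y).getLast? = some y ∧
      ∀ e ∈ pathEdges (γ x y), k e.1 e.2 ≠ 0)
    (hη : ∀ x, 0 ≤ η x) (hη1 : ∑ x, η x = 1) (f : X → ℝ) :
    (∑ z, badPairWeight π η B z * |f z.1 - f z.2|) ^ 2 ≤
      (∑ x ∈ B, π x + ∑ x ∈ B, η x) ^ 2 * badResistance π k γ B *
        (2 * dirichletForm π k f f) := by
  have hπ0 : ∀ x, 0 ≤ π x := fun x => (hπ x).le
  have hD : 0 ≤ 2 * dirichletForm π k f f := mul_nonneg two_pos.le (dirichletForm_nonneg hπ0 hk f)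
  have hpair : ∀ z ∈ (univ : Finset (X × X)), badPairWeight π η B z ≠ 0 →
      |f z.1 - f z.2| ^ 2 ≤ badResistance π k γ B * (2 * dirichletForm π k f f) := by
    intro z _ hz
    have hB : z.1 ∈ B ∨ z.2 ∈ B := by
      by_contra h
      exact hz (if_neg h)
    by_cases hxy : z.1 = z.2
    · rw [hxy, sub_self, abs_zero, sq, zero_mul]
      exact mul_nonneg (badResistance_nonneg hπ0 hk) hD
    obtain ⟨hx, hy, hke⟩ := hγ z.1 z.2 hxy
    exact (sq_abs_sub_le_sum_one_div_Qw_mul hπ hk f hx hy hke).trans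
      (mul_le_mul_of_nonneg_right (sum_one_div_Qw_le_badResistance hπ0 hk hxy hB) hD)
  calc (∑ z, badPairWeight π η B z * |f z.1 - f z.2|) ^ 2
      ≤ (∑ z, badPairWeight π η B z) ^ 2 *
          (badResistance π k γ B * (2 * dirichletForm π k f f)) :=
        sq_sum_mul_le_sq_sum_mul univ (fun z _ => badPairWeight_nonneg hπ0 hη z) hpair
    _ ≤ (∑ x ∈ B, π x + ∑ x ∈ B, η x) ^ 2 *
          (badResistance π k γ B * (2 * dirichletForm π k f f)) := by
        gcongr
        · exact mul_nonneg (badResistance_nonneg hπ0 hk) hD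
        · exact sum_nonneg fun z _ => badPairWeight_nonneg hπ0 hη z
        · exact sum_badPairWeight_le hπ0 hη hπ1 hη1
    _ = _ := by ring

end Partition

theorem rpow_sum_mul_abs_le {X : Type} [Fintype X] [DecidableEq X] {π : X → ℝ}
    (hπ : ∀ x, 0 < π x) (hπ1 : ∑ x, π x = 1) {k : X → X → ℝ} (hk : ∀ x y, 0 ≤ k x y)
    {γ : X → X → List X}
    (hγ : ∀ x y, x ≠ y → (γ x y).head? = some x ∧ (γ x y).getLast? = some y ∧
      ∀ e ∈ pathEdges (γ x y), k e.1 e.2 ≠ 0)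
    {p : ℝ} (hp : p ∈ Set.Ioc (0 : ℝ) 1) {B G : Finset X} (hcover : B ∪ G = univ)
    {η : X → ℝ} (hη : ∀ x, 0 ≤ η x) (hη1 : ∑ x, η x = 1) {f : X → ℝ}
    (hmean : ∑ x, π x * f x = 0) :
    (∑ x, η x * |f x|) ^ (2 / p) ≤
      2 ^ (6 / p - 3) * (maxPathLength γ * goodCongestion π k η γ G +
        2 * badResistance π k γ B * ((∑ x ∈ B, π x) ^ (2 / p) + (∑ x ∈ B, η x) ^ (2 / p))) *
      (dirichletForm π k f f * supNorm f ^ ((2 - 2 * p) / p)) := by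
  obtain ⟨hp0, hp1⟩ := hp
  have hπ0 : ∀ x, 0 ≤ π x := fun x => (hπ x).le
  have hq : 2 ≤ 2 / p := by rw [le_div_iff₀ hp0]; linarith
  set P := ∑ x ∈ B, π x
  set H := ∑ x ∈ B, η x
  set a := ∑ z, goodPairWeight π η G z * |f z.1 - f z.2|
  set b := ∑ z, badPairWeight π η B z * |f z.1 - f z.2|
  have hgood := goodPairWeight_nonneg hπ0 hη (G := G)
  have hbad := badPairWeight_nonneg hπ0 hη (B := B)
  have hSab : ∑ x, η x * |f x| ≤ a + b := by
    refine (sum_mul_abs_le_sum_mul_abs_sub hπ0 hπ1 hη hmean).trans ?_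
    rw [← sum_add_distrib]
    refine sum_le_sum fun z _ => ?_
    rw [← add_mul]
    exact mul_le_mul_of_nonneg_right
      (mul_le_goodPairWeight_add_badPairWeight hcover hπ0 hη z) (abs_nonneg _)
  have hN := supNorm_nonneg f
  have haN : a ≤ 2 * supNorm f := by
    refine (sum_mul_abs_sub_le_sum_mul_supNorm hgood f).trans ?_
    nlinarith [sum_goodPairWeight_le hπ0 hη hπ1 hη1 (G := G)]
  have hbN : b ≤ 2 * (supNorm f * (P + H)) := by
    refine (sum_mul_abs_sub_le_sum_mul_supNorm hbad f).trans ?_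
    nlinarith [sum_badPairWeight_le hπ0 hη hπ1 hη1 (B := B)]
  have key := rpow_le_of_le_add hq
    (sum_nonneg fun x _ => mul_nonneg (hη x) (abs_nonneg _))
    (sum_nonneg fun z _ => mul_nonneg (hgood z) (abs_nonneg _))
    (sum_nonneg fun z _ => mul_nonneg (hbad z) (abs_nonneg _))
    (sum_nonneg fun x _ => hπ0 x) (sum_nonneg fun x _ => hη x)
    (mul_nonneg maxPathLength_nonneg (goodCongestion_nonneg hπ0 hk hη))
    (badResistance_nonneg hπ0 hk) (dirichletForm_nonneg hπ0 hk f) hSab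
    haN (sq_sum_goodPairWeight_mul_abs_sub_le hπ hπ1 hk hγ hη hη1 f)
    hbN    (sq_sum_badPairWeight_mul_abs_sub_le hπ hπ1 hk hγ hη hη1 f)
  rwa [show 3 * (2 / p) - 3 = 6 / p - 3 by ring, show 2 / p - 2 = (2 - 2 * p) / p by
    field_simp] at key

theorem statement6_general {X : Type} [Fintype X] [DecidableEq X]
    (π : X → ℝ) (hπpos : ∀ x, 0 < π x) (hπ1 : ∑ x, π x = 1)
    (k : X → X → ℝ) (hknn : ∀ x y, 0 ≤ k x y)
    -- a choice of a path `γ x y` from `x` to `y` for each pair of distinct points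
    (γ : X → X → List X)
    (hγ : ∀ x y, x ≠ y → (γ x y).head? = some x ∧ (γ x y).getLast? = some y ∧
      ∀ e ∈ pathEdges (γ x y), k e.1 e.2 ≠ 0)
    (p : ℝ) (hp : p ∈ Set.Ioc (0 : ℝ) 1)
    -- a partition of the state space into a bad set `B` and a good set `G`
    (B G : Finset X) (hcover : B ∪ G = Finset.univ)
    (η : X → ℝ) (hηnn : ∀ x, 0 ≤ η x) (hη1 : ∑ x, η x = 1) :
    1 / genPoincare π k η p ≤
      (2 : ℝ) ^ (6 / p - 3) *
        ((sSup { r : ℝ | ∃ x y : X, x ≠ y ∧ r = ((γ x y).length - 1 : ℕ) }) *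
          (sSup { r : ℝ | ∃ e : X × X, Qw π k e ≠ 0 ∧
            r = (1 / Qw π k e) *
              ∑ x, ∑ y, if x ∈ G ∧ y ∈ G ∧ x ≠ y ∧ e ∈ pathEdges (γ x y) then
                π x * η y else 0 }) +
        2 * (∑ e : X × X,
              if ∃ x y : X, x ≠ y ∧ e ∈ pathEdges (γ x y) ∧ (x ∈ B ∨ y ∈ B) then
                1 / Qw π k e else 0) *
          ((∑ x ∈ B, π x) ^ (2 / p) + (∑ x ∈ B, η x) ^ (2 / p))) := by
  have hπ : ∀ x, 0 ≤ π x := fun x => (hπpos x).le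
  refine one_div_sInf_le ?_ ?_
  · exact mul_nonneg (Real.rpow_nonneg zero_le_two _) <| add_nonneg
      (mul_nonneg maxPathLength_nonneg (goodCongestion_nonneg hπ hknn hηnn))
      (mul_nonneg (mul_nonneg zero_le_two (badResistance_nonneg hπ hknn)) (add_nonneg
        (Real.rpow_nonneg (sum_nonneg fun x _ => hπ x) _)
        (Real.rpow_nonneg (sum_nonneg fun x _ => hηnn x) _)))
  · rintro r ⟨f, -, hmean, hS, rfl⟩
    have hSpos : 0 < ∑ x, η x * |f x| :=
      (sum_nonneg fun x _ => mul_nonneg (hηnn x) (abs_nonneg _)).lt_of_ne' hS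
    rw [← mul_div_assoc, le_div_iff₀ (Real.rpow_pos_of_pos hSpos _), one_mul]
    exact rpow_sum_mul_abs_le hπpos hπ1 hknn hγ hp hcover hηnn hη1 hmean

theorem statement6 {X : Type} [Fintype X] [DecidableEq X] [Nonempty X]
    (π : X → ℝ) (hπpos : ∀ x, 0 < π x) (hπ1 : ∑ x, π x = 1)
    (k : X → X → ℝ) (hknn : ∀ x y, 0 ≤ k x y) (hksymm : ∀ x y, k x y = k y x)
    (hconn : (SimpleGraph.fromRel fun x y => k x y ≠ 0).Connected)
    -- a choice of a path `γ x y` from `x` to `y` for each pair of distinct points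
    (γ : X → X → List X)
    (hγ : ∀ x y, x ≠ y → (γ x y).head? = some x ∧ (γ x y).getLast? = some y ∧
      ∀ e ∈ pathEdges (γ x y), k e.1 e.2 ≠ 0)
    (p : ℝ) (hp : p ∈ Set.Ioc (0 : ℝ) 1)
    -- a partition of the state space into a bad set `B` and a good set `G`
    (B G : Finset X) (hBG : Disjoint B G) (hcover : B ∪ G = Finset.univ)
    (η : X → ℝ) (hηnn : ∀ x, 0 ≤ η x) (hη1 : ∑ x, η x = 1) :
    1 / genPoincare π k η p ≤
      (2 : ℝ) ^ (6 / p - 3) *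
        ((sSup { r : ℝ | ∃ x y : X, x ≠ y ∧ r = ((γ x y).length - 1 : ℕ) }) *
          (sSup { r : ℝ | ∃ e : X × X, Qw π k e ≠ 0 ∧
            r = (1 / Qw π k e) *
              ∑ x, ∑ y, if x ∈ G ∧ y ∈ G ∧ x ≠ y ∧ e ∈ pathEdges (γ x y) then
                π x * η y else 0 }) +
        2 * (∑ e : X × X,
              if ∃ x y : X, x ≠ y ∧ e ∈ pathEdges (γ x y) ∧ (x ∈ B ∨ y ∈ B) then
                1 / Qw π k e else 0) *
          ((∑ x ∈ B, π x) ^ (2 / p) + (∑ x ∈ B, η x) ^ (2 / p))) :=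
  statement6_general π hπpos hπ1 k hknn γ hγ p hp B G hcover η hηnn hη1

end
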